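/- arXiv:2506.06246 — 2 statements merged into one kernel-verified Lean document; each statement's English description precedes it below -/
import Mathlib

section
/- Let p be a prime, k a perfect field of characteristic p, W(k) the ring of p-typical Witt vectors of k, and B a smooth W(k)-algebra (formally smooth and of finite presentation). Fix n ≥ 1 and set B_n := B/pⁿB, which is a smooth algebra over W_n(k) = W(k)/pⁿW(k). For m ≥ 0 let 𝒟_m(B) ⊆ End_{W(k)}(B) and 𝒟_m(B_n) ⊆ End_{W_n(k)}(B_n) denote the modules of differential operators of order ≤ m, defined by the commutator filtration: 𝒟_{−1} := 0 and θ ∈ 𝒟_m iff [θ, b] ∈ 𝒟_{m−1} for every element b of the ring (acting by multiplication). Every θ ∈ 𝒟_m(B) preserves pⁿB and hence induces an element of 𝒟_m(B_n). Then for every m ≥ 0 the induced W_n(k)-linear map 𝒟_m(B) ⊗_{W(k)} W_n(k) → 𝒟_m(B_n) is bijective. -/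
universe u

/-- The commutator `[θ, a] = θ ∘ (a·) − (a·) ∘ θ` of an operator `θ : M → M` with the
multiplication operator by `a ∈ M`. -/
def mulCommutator {M : Type*} [CommRing M] (a : M) (θ : M → M) : M → M :=
  fun x => θ (a * x) - a * θ x

/-- `IsDiffOpOfOrderLE q θ` says that `θ` is a differential operator of order `≤ q` in the
Grothendieck sense (commutator filtration): `𝒟_{-1} = 0` and `θ ∈ 𝒟_q` iff `[θ, a] ∈ 𝒟_{q-1}`
for all `a`. -/
def IsDiffOpOfOrderLE {M : Type*} [CommRing M] : ℕ → (M → M) → Prop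
  | 0, θ => ∀ a : M, mulCommutator a θ = 0
  | q + 1, θ => ∀ a : M, IsDiffOpOfOrderLE q (mulCommutator a θ)

/-- An `R`-linear differential operator of order `≤ q` on a commutative `R`-algebra `M`. -/
def IsDiffOp (R M : Type*) [CommRing R] [CommRing M] [Algebra R M] (q : ℕ) (θ : M → M) :
    Prop :=
  (∀ x y, θ (x + y) = θ x + θ y) ∧ (∀ (c : R) (x : M), θ (c • x) = c • θ x) ∧
    IsDiffOpOfOrderLE q θ

universe v

namespace DiffOpProofAux
variable {R S : Type*} [CommRing R] [CommRing S]

def ordC (χ : R → S) (a : R) (Θ : R → S) : R → S := fun f => Θ (a * f) - χ a * Θ f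

def OrdLE (χ : R → S) : ℕ → (R → S) → Prop
  | 0, Θ => ∀ a, ordC χ a Θ = 0
  | q + 1, Θ => ∀ a, OrdLE χ q (ordC χ a Θ)

theorem ordLE_congr (χ : R → S) : ∀ (q : ℕ) {Θ Θ' : R → S}, (∀ f, Θ f = Θ' f) →
    OrdLE χ q Θ → OrdLE χ q Θ'
  | 0, Θ, Θ', h, h0 => fun a => by
      funext f; have := congr_fun (h0 a) f
      simp only [ordC, h] at this ⊢; exact this
  | q + 1, Θ, Θ', h, h0 => fun a =>
      ordLE_congr χ q (fun f => by simp only [ordC, h]) (h0 a)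

theorem ordLE_zero_fn (χ : R → S) : ∀ q : ℕ, OrdLE χ q (fun _ => 0)
  | 0 => fun a => by funext f; simp [ordC]
  | q + 1 => fun a => ordLE_congr χ q (fun f => by simp [ordC]) (ordLE_zero_fn χ q)

theorem ordLE_add (χ : R → S) : ∀ (q : ℕ) {Θ₁ Θ₂ : R → S}, OrdLE χ q Θ₁ → OrdLE χ q Θ₂ →
    OrdLE χ q (fun f => Θ₁ f + Θ₂ f)
  | 0, Θ₁, Θ₂, h1, h2 => fun a => by
      funext f
      have e1 := congr_fun (h1 a) f; have e2 := congr_fun (h2 a) f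
      simp only [ordC, Pi.zero_apply] at e1 e2 ⊢
      linear_combination e1 + e2
  | q + 1, Θ₁, Θ₂, h1, h2 => fun a => by
      refine ordLE_congr χ q (Θ := fun f => ordC χ a Θ₁ f + ordC χ a Θ₂ f) ?_
        (ordLE_add χ q (h1 a) (h2 a))
      intro f; simp only [ordC]; ring

theorem ordLE_mulLeft (χ : R → S) (u : S) : ∀ (q : ℕ) {Θ : R → S}, OrdLE χ q Θ →
    OrdLE χ q (fun f => u * Θ f)
  | 0, Θ, h => fun a => by
      funext f; have := congr_fun (h a) f
      simp only [ordC, Pi.zero_apply] at this ⊢; linear_combination u * this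
  | q + 1, Θ, h => fun a => by
      refine ordLE_congr χ q (Θ := fun f => u * ordC χ a Θ f) ?_ (ordLE_mulLeft χ u q (h a))
      intro f; simp only [ordC]; ring

theorem ordLE_precomp (χ : R → S) (b : R) : ∀ (q : ℕ) {Θ : R → S}, OrdLE χ q Θ →
    OrdLE χ q (fun f => Θ (b * f))
  | 0, Θ, h => fun a => by
      funext f; have := congr_fun (h a) (b * f)
      simp only [ordC, Pi.zero_apply] at this ⊢
      rw [show b * (a * f) = a * (b * f) by ring]
      exact this
  | q + 1, Θ, h => fun a => by
      refine ordLE_congr χ q (Θ := fun f => ordC χ a Θ (b * f)) ?_ (ordLE_precomp χ b q (h a))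
      intro f; simp only [ordC]; rw [show b * (a * f) = a * (b * f) by ring]

theorem ordLE_pullback {T : Type*} [CommRing T] (g : R → S) (hg : ∀ x y, g (x * y) = g x * g y)
    (χ : S → T) : ∀ (q : ℕ) (Θ : S → T), OrdLE χ q Θ →
      OrdLE (fun x => χ (g x)) q (fun x => Θ (g x))
  | 0, Θ, h => fun a => by
      funext f; have := congr_fun (h (g a)) (g f)
      simp only [ordC, hg] at this ⊢; exact this
  | q + 1, Θ, h => fun a => by
      refine ordLE_congr _ q (Θ := fun x => ordC χ (g a) Θ (g x)) ?_
        (ordLE_pullback g hg χ q _ (h (g a)))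
      intro f; simp only [ordC, hg]


theorem ordLE_of_isDiffOp {M : Type*} [CommRing M] :
    ∀ (q : ℕ) (θ : M → M), IsDiffOpOfOrderLE q θ → OrdLE (id : M → M) q θ
  | 0, θ, h => fun a => h a
  | q + 1, θ, h => fun a => ordLE_of_isDiffOp q _ (h a)

theorem ordLE_kills (ρ : R →+* S) :
    ∀ (q : ℕ) (Θ : R → S), (∀ x y, Θ (x + y) = Θ x + Θ y) → OrdLE (⇑ρ) q Θ →
      ∀ g ∈ (RingHom.ker ρ) ^ (q + 1), Θ g = 0 := by
  intro q
  induction q with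
  | zero =>
    intro Θ hadd h g hg
    rw [pow_one] at hg
    have := congr_fun (h g) 1
    simp only [ordC, Pi.zero_apply, mul_one] at this
    rw [sub_eq_zero] at this
    rw [this, (RingHom.mem_ker).mp hg, zero_mul]
  | succ q ih =>
    intro Θ hadd h g hg
    rw [pow_succ'] at hg
    refine Submodule.mul_induction_on hg ?_ ?_
    · intro a ha b hb
      have hval : Θ (a * b) = ordC (⇑ρ) a Θ b + ρ a * Θ b := by simp [ordC]
      rw [hval, (RingHom.mem_ker).mp ha, zero_mul, add_zero]
      refine ih (ordC (⇑ρ) a Θ) ?_ (h a) b hb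
      intro x y; simp only [ordC, mul_add, hadd]; ring
    · intro x y hx hy
      rw [hadd, hx, hy, add_zero]

theorem transport_ord {R B C : Type*} [CommRing R] [CommRing B] [CommRing C]
    (q' : R → B) (mkC : R → C) (hmkC : ∀ x y, mkC (x * y) = mkC x * mkC y)
    (rep : C → R) (hrep : ∀ z, mkC (rep z) = z)
    (s : B → C) (hs : ∀ x y, s (x * y) = s x * s y)
    (hqs : ∀ b, q' (rep (s b)) = b) :
    ∀ (k : ℕ) (Ψ : R → B), (∀ f f', mkC f = mkC f' → Ψ f = Ψ f') → OrdLE q' k Ψ →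
      IsDiffOpOfOrderLE k (fun b => Ψ (rep (s b))) := by
  have key : ∀ (Ψ : R → B), (∀ f f', mkC f = mkC f' → Ψ f = Ψ f') →
      ∀ b x, Ψ (rep (s (b * x))) = Ψ (rep (s b) * rep (s x)) := by
    intro Ψ hfib b x
    refine hfib _ _ ?_
    rw [hrep, hs, hmkC, hrep, hrep]
  intro k
  induction k with
  | zero =>
    intro Ψ hfib h b
    funext x
    have h2 := congr_fun (h (rep (s b))) (rep (s x))
    simp only [ordC, Pi.zero_apply] at h2 ⊢
    have h3 : b * Ψ (rep (s x)) = q' (rep (s b)) * Ψ (rep (s x)) := by rw [hqs]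
    rw [mulCommutator, key Ψ hfib b x, h3]
    exact h2
  | succ k ih =>
    intro Ψ hfib h b
    have hfun : mulCommutator b (fun b' => Ψ (rep (s b'))) =
        fun x => (ordC q' (rep (s b)) Ψ) (rep (s x)) := by
      funext x
      rw [mulCommutator, ordC, key Ψ hfib b x, hqs]
    rw [hfun]
    refine ih _ ?_ (h (rep (s b)))
    intro f f' hff
    simp only [ordC]
    rw [hfib f f' hff, hfib (rep (s b) * f) (rep (s b) * f') (by rw [hmkC, hmkC, hff])]

theorem descend_ord {B C : Type*} [CommRing B] [CommRing C] (π : B →+* C)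
    (hsurj : Function.Surjective π) :
    ∀ (q : ℕ) (θ : B → B) (θbar : C → C), (∀ x, θbar (π x) = π (θ x)) →
      IsDiffOpOfOrderLE q θ → IsDiffOpOfOrderLE q θbar := by
  intro q
  induction q with
  | zero =>
    intro θ θbar hcomp h abar
    obtain ⟨a, rfl⟩ := hsurj abar
    funext z
    obtain ⟨x, rfl⟩ := hsurj z
    have := congr_fun (h a) x
    simp only [mulCommutator, Pi.zero_apply] at this ⊢
    rw [← map_mul, hcomp, hcomp, ← map_mul, ← map_sub, this, map_zero]
  | succ q ih =>
    intro θ θbar hcomp h abar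
    obtain ⟨a, rfl⟩ := hsurj abar
    refine ih (mulCommutator a θ) _ ?_ (h a)
    intro x
    simp only [mulCommutator]
    rw [← map_mul, hcomp, hcomp, ← map_mul, ← map_sub]

theorem div_ord {B : Type*} [CommRing B] (d : B) (hreg : ∀ x y : B, d * x = d * y → x = y) :
    ∀ (q : ℕ) (θ η : B → B), (∀ x, θ x = d * η x) → IsDiffOpOfOrderLE q θ →
      IsDiffOpOfOrderLE q η := by
  intro q
  induction q with
  | zero =>
    intro θ η hθη h a
    funext x
    have := congr_fun (h a) x
    simp only [mulCommutator, Pi.zero_apply] at this ⊢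
    refine hreg _ _ ?_
    rw [mul_zero]
    calc d * (η (a * x) - a * η x) = θ (a * x) - a * θ x := by rw [hθη, hθη]; ring
    _ = 0 := this
  | succ q ih =>
    intro θ η hθη h a
    refine ih (mulCommutator a θ) (mulCommutator a η) ?_ (h a)
    intro x
    simp only [mulCommutator]
    rw [hθη, hθη]; ring


open MvPolynomial

variable {A : Type*} [CommRing A] {N : ℕ}

/-- doubled-variable Taylor expansion map. -/
noncomputable def Phi : MvPolynomial (Fin N) A →ₐ[A] MvPolynomial (Fin N) (MvPolynomial (Fin N) A) :=
  aeval (fun i => C (X i) + X i)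

/-- divided-power (Hasse) derivative. -/
noncomputable def hd (α : Fin N →₀ ℕ) (f : MvPolynomial (Fin N) A) : MvPolynomial (Fin N) A :=
  coeff α (Phi f)

theorem hd_add (α : Fin N →₀ ℕ) (f g : MvPolynomial (Fin N) A) :
    hd α (f + g) = hd α f + hd α g := by simp [hd, map_add, coeff_add]

theorem hd_smul (α : Fin N →₀ ℕ) (w : A) (f : MvPolynomial (Fin N) A) :
    hd α (w • f) = w • hd α f := by
  simp [hd, map_smul, coeff_smul]

theorem hd_zero (f : MvPolynomial (Fin N) A) : hd (0 : Fin N →₀ ℕ) f = f := by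
  induction f using MvPolynomial.induction_on with
  | C a =>
    simp [hd, Phi, algebraMap_eq]
  | add p q hp hq => rw [hd_add, hp, hq]
  | mul_X p i hp =>
    have : Phi (p * X i) = Phi p * (C (X i) + X i) := by
      rw [map_mul, Phi, aeval_X]
    rw [hd, this, mul_add, coeff_add, mul_comm, coeff_C_mul, coeff_mul_X', ← hd]
    simp [hp, mul_comm]

theorem hd_one (α : Fin N →₀ ℕ) : hd α (1 : MvPolynomial (Fin N) A) = if α = 0 then 1 else 0 := by
  simp [hd, map_one, coeff_one, eq_comm]

theorem hd_X_mul (α : Fin N →₀ ℕ) (i : Fin N) (f : MvPolynomial (Fin N) A) :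
    hd α (X i * f) = X i * hd α f +
      (if Finsupp.single i 1 ≤ α then hd (α - Finsupp.single i 1) f else 0) := by
  have h1 : Phi (X i * f) = (C (X i) + X i) * Phi f := by rw [map_mul, Phi, aeval_X]
  rw [hd, h1, add_mul, coeff_add, coeff_C_mul, coeff_X_mul']
  have hcond : (i ∈ α.support) = (Finsupp.single i 1 ≤ α) := by
    simp [Finsupp.single_le_iff, Finsupp.mem_support_iff, Nat.one_le_iff_ne_zero]
  congr 1
  rw [← hd]
  by_cases h : Finsupp.single i 1 ≤ α
  · rw [if_pos h, if_pos (by rw [hcond]; exact h), hd]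
  · rw [if_neg h, if_neg (by rw [hcond]; exact h)]

/-- total degree of a multi-index. -/
def deg (α : Fin N →₀ ℕ) : ℕ := ∑ i, α i

theorem deg_add (α β : Fin N →₀ ℕ) : deg (α + β) = deg α + deg β := by
  simp [deg, Finsupp.add_apply, Finset.sum_add_distrib]

theorem deg_single (i : Fin N) : deg (Finsupp.single i 1) = 1 := by
  simp [deg, Finsupp.single_apply]

theorem eq_zero_of_deg_eq_zero {α : Fin N →₀ ℕ} (h : deg α ≤ 0) : α = 0 := by
  ext i
  have := Finset.sum_eq_zero_iff.mp (Nat.le_zero.mp h) i (Finset.mem_univ i)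
  simpa using this

/-- the finset of multi-indices of degree at most `m`. -/
noncomputable def Am (N m : ℕ) : Finset (Fin N →₀ ℕ) :=
  (Finset.Iic (Finsupp.equivFunOnFinite.symm fun _ => m)).filter (fun α => deg α ≤ m)

theorem mem_Am {m : ℕ} {α : Fin N →₀ ℕ} : α ∈ Am N m ↔ deg α ≤ m := by
  constructor
  · intro h; exact (Finset.mem_filter.mp h).2
  · intro h
    refine Finset.mem_filter.mpr ⟨Finset.mem_Iic.mpr ?_, h⟩
    intro i
    have h1 : α i ≤ deg α := Finset.single_le_sum (f := fun j => α j) (fun _ _ => Nat.zero_le _)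
      (Finset.mem_univ i)
    simpa using h1.trans h

theorem Am_zero : Am N 0 = {0} := by
  ext α
  rw [mem_Am, Finset.mem_singleton]
  constructor
  · exact eq_zero_of_deg_eq_zero
  · rintro rfl; simp [deg]

theorem zero_mem_Am (m : ℕ) : (0 : Fin N →₀ ℕ) ∈ Am N m := by
  rw [mem_Am]; simp [deg]

variable {S' : Type*} [CommRing S'] [Algebra A S']

/-- the model differential operator with coefficients `c`. -/
noncomputable def ThetaC (χ : MvPolynomial (Fin N) A →ₐ[A] S') (m : ℕ)
    (c : (Fin N →₀ ℕ) → S') : MvPolynomial (Fin N) A → S' :=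
  fun f => ∑ α ∈ Am N m, χ (hd α f) * c α

theorem thetaC_add (χ : MvPolynomial (Fin N) A →ₐ[A] S') (m : ℕ) (c : (Fin N →₀ ℕ) → S')
    (f g : MvPolynomial (Fin N) A) : ThetaC χ m c (f + g) = ThetaC χ m c f + ThetaC χ m c g := by
  rw [ThetaC, ThetaC, ThetaC, ← Finset.sum_add_distrib]
  refine Finset.sum_congr rfl fun α _ => ?_
  rw [hd_add, map_add, add_mul]

theorem thetaC_smul (χ : MvPolynomial (Fin N) A →ₐ[A] S') (m : ℕ) (c : (Fin N →₀ ℕ) → S')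
    (w : A) (f : MvPolynomial (Fin N) A) : ThetaC χ m c (w • f) = w • ThetaC χ m c f := by
  rw [ThetaC, ThetaC, Finset.smul_sum]
  refine Finset.sum_congr rfl fun α _ => ?_
  rw [hd_smul, map_smul, smul_mul_assoc]

theorem thetaC_zero_apply (χ : MvPolynomial (Fin N) A →ₐ[A] S') (c : (Fin N →₀ ℕ) → S')
    (f : MvPolynomial (Fin N) A) : ThetaC χ 0 c f = χ f * c 0 := by
  rw [ThetaC, Am_zero, Finset.sum_singleton, hd_zero]

theorem ordC_X_thetaC (χ : MvPolynomial (Fin N) A →ₐ[A] S') (m : ℕ) (c : (Fin N →₀ ℕ) → S')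
    (i : Fin N) (f : MvPolynomial (Fin N) A) :
    ordC (⇑χ) (X i) (ThetaC χ (m + 1) c) f
      = ThetaC χ m (fun δ => c (δ + Finsupp.single i 1)) f := by
  classical
  have h1 : ∀ α, χ (hd α (X i * f)) * c α - χ (X i) * (χ (hd α f) * c α)
      = if Finsupp.single i 1 ≤ α then χ (hd (α - Finsupp.single i 1) f) * c α else 0 := by
    intro α
    rw [hd_X_mul, map_add, map_mul]
    split_ifs with h
    · ring
    · simp only [map_zero, add_zero]; ring
  have h2 : ordC (⇑χ) (X i) (ThetaC χ (m + 1) c) f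
      = ∑ α ∈ Am N (m + 1), (χ (hd α (X i * f)) * c α - χ (X i) * (χ (hd α f) * c α)) := by
    rw [ordC, ThetaC, ThetaC, Finset.mul_sum, ← Finset.sum_sub_distrib]
  rw [h2]
  rw [Finset.sum_congr rfl fun α _ => h1 α, ← Finset.sum_filter]
  refine Finset.sum_bij' (fun α _ => α - Finsupp.single i 1) (fun δ _ => δ + Finsupp.single i 1)
    ?_ ?_ ?_ ?_ ?_
  · intro α hα
    obtain ⟨hα1, hα2⟩ := Finset.mem_filter.mp hα
    have he : α - Finsupp.single i 1 + Finsupp.single i 1 = α := tsub_add_cancel_of_le hα2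
    have hdeg := mem_Am.mp hα1
    have hdeq : deg (α - Finsupp.single i 1) + deg (Finsupp.single i 1) = deg α := by
      rw [← deg_add, he]
    rw [deg_single] at hdeq
    show α - Finsupp.single i 1 ∈ Am N m
    rw [mem_Am]
    omega
  · intro δ hδ
    refine Finset.mem_filter.mpr ⟨mem_Am.mpr ?_, le_add_self⟩
    rw [deg_add, deg_single]
    exact Nat.add_le_add_right (mem_Am.mp hδ) 1
  · intro α hα
    exact tsub_add_cancel_of_le (Finset.mem_filter.mp hα).2
  · intro δ _
    exact add_tsub_cancel_right δ (Finsupp.single i 1)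
  · intro α hα
    obtain ⟨-, hα2⟩ := Finset.mem_filter.mp hα
    show χ (hd (α - Finsupp.single i 1) f) * c α
      = χ (hd (α - Finsupp.single i 1) f) * c (α - Finsupp.single i 1 + Finsupp.single i 1)
    rw [tsub_add_cancel_of_le hα2]


variable {S' : Type*} [CommRing S'] [Algebra A S']

theorem thetaC_ordLE (χ : MvPolynomial (Fin N) A →ₐ[A] S') :
    ∀ (m : ℕ) (c : (Fin N →₀ ℕ) → S'), OrdLE (⇑χ) m (ThetaC χ m c) := by
  intro m
  induction m with
  | zero =>
    intro c a
    funext f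
    simp only [ordC, Pi.zero_apply, thetaC_zero_apply, map_mul]
    ring
  | succ m ih =>
    intro c a
    show OrdLE (⇑χ) m (ordC (⇑χ) a (ThetaC χ (m + 1) c))
    induction a using MvPolynomial.induction_on with
    | C w =>
      refine ordLE_congr (⇑χ) m (Θ := fun _ => 0) ?_ (ordLE_zero_fn (⇑χ) m)
      intro f
      simp only [ordC]
      rw [C_mul', thetaC_smul, ← algebraMap_eq, AlgHom.commutes, ← Algebra.smul_def]
      simp
    | add a b ha hb =>
      refine ordLE_congr (⇑χ) m
        (Θ := fun f => ordC (⇑χ) a (ThetaC χ (m + 1) c) f + ordC (⇑χ) b (ThetaC χ (m + 1) c) f)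
        ?_ (ordLE_add (⇑χ) m ha hb)
      intro f
      simp only [ordC, add_mul, map_add, thetaC_add]
      ring
    | mul_X a i ha =>
      refine ordLE_congr (⇑χ) m
        (Θ := fun f => ordC (⇑χ) a (ThetaC χ (m + 1) c) (X i * f)
          + χ a * ordC (⇑χ) (X i) (ThetaC χ (m + 1) c) f) ?_
        (ordLE_add (⇑χ) m (ordLE_precomp (⇑χ) (X i) m ha) ?_)
      · intro f
        simp only [ordC, map_mul]
        rw [show a * X i * f = a * (X i * f) by ring]
        ring
      · refine ordLE_mulLeft (⇑χ) (χ a) m ?_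
        refine ordLE_congr (⇑χ) m
          (Θ := ThetaC χ m (fun δ => c (δ + Finsupp.single i 1))) ?_ (ih _)
        intro f
        rw [ordC_X_thetaC]

theorem ordC_zero_of_X (χ : MvPolynomial (Fin N) A →ₐ[A] S') (Θ : MvPolynomial (Fin N) A → S')
    (hadd : ∀ x y, Θ (x + y) = Θ x + Θ y) (hsmul : ∀ (w : A) x, Θ (w • x) = w • Θ x)
    (hX : ∀ (i : Fin N) f, Θ (X i * f) = χ (X i) * Θ f) :
    ∀ a f, Θ (a * f) = χ a * Θ f := by
  intro a
  induction a using MvPolynomial.induction_on with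
  | C w =>
    intro f
    rw [C_mul', hsmul, ← algebraMap_eq, AlgHom.commutes, ← Algebra.smul_def]
  | add a b ha hb =>
    intro f
    rw [add_mul, hadd, ha, hb, map_add, add_mul]
  | mul_X a i ha =>
    intro f
    rw [show a * X i * f = a * (X i * f) by ring, ha (X i * f), hX i f, map_mul]
    ring

theorem thetaC_unique (χ : MvPolynomial (Fin N) A →ₐ[A] S') :
    ∀ (m : ℕ) (c c' : (Fin N →₀ ℕ) → S'), (∀ f, ThetaC χ m c f = ThetaC χ m c' f) →
      ∀ α, deg α ≤ m → c α = c' α := by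
  intro m
  induction m with
  | zero =>
    intro c c' h α hα
    have h1 := h 1
    rw [thetaC_zero_apply, thetaC_zero_apply, map_one, one_mul, one_mul] at h1
    rw [eq_zero_of_deg_eq_zero hα]
    exact h1
  | succ m ih =>
    intro c c' h α hα
    have eval1 : ∀ (d : (Fin N →₀ ℕ) → S'), ThetaC χ (m + 1) d 1 = d 0 := by
      intro d
      rw [ThetaC]
      rw [Finset.sum_eq_single_of_mem 0 (zero_mem_Am (m + 1))]
      · rw [hd_one, if_pos rfl, map_one, one_mul]
      · intro b _ hb
        rw [hd_one, if_neg hb, map_zero, zero_mul]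
    by_cases hα0 : α = 0
    · subst hα0
      have := h 1
      rw [eval1, eval1] at this
      exact this
    · have hne : α.support.Nonempty := Finsupp.support_nonempty_iff.mpr hα0
      set i := α.support.min' hne with hidef
      have hi : i ∈ α.support := α.support.min'_mem hne
      have hle : Finsupp.single i 1 ≤ α := by
        rw [Finsupp.single_le_iff]
        exact Nat.one_le_iff_ne_zero.mpr (Finsupp.mem_support_iff.mp hi)
      have he : α - Finsupp.single i 1 + Finsupp.single i 1 = α := tsub_add_cancel_of_le hle
      have hXeq : ∀ f, ThetaC χ m (fun δ => c (δ + Finsupp.single i 1)) f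
          = ThetaC χ m (fun δ => c' (δ + Finsupp.single i 1)) f := by
        intro f
        rw [← ordC_X_thetaC, ← ordC_X_thetaC]
        simp only [ordC, h]
      have hdd : deg (α - Finsupp.single i 1) ≤ m := by
        have : deg (α - Finsupp.single i 1) + deg (Finsupp.single i 1) = deg α := by
          rw [← deg_add, he]
        rw [deg_single] at this
        omega
      have := ih _ _ hXeq (α - Finsupp.single i 1) hdd
      rw [he] at this
      exact this

theorem thetaC_exists (χ : MvPolynomial (Fin N) A →ₐ[A] S') :
    ∀ (m : ℕ) (Θ : MvPolynomial (Fin N) A → S'),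
      (∀ x y, Θ (x + y) = Θ x + Θ y) → (∀ (w : A) x, Θ (w • x) = w • Θ x) →
      OrdLE (⇑χ) m Θ → ∃ c, ∀ f, Θ f = ThetaC χ m c f := by
  intro m
  induction m with
  | zero =>
    intro Θ _ _ h
    refine ⟨fun _ => Θ 1, fun f => ?_⟩
    have := congr_fun (h f) 1
    simp only [ordC, Pi.zero_apply, mul_one] at this
    rw [thetaC_zero_apply]
    exact (sub_eq_zero.mp this)
  | succ m ih =>
    intro Θ hadd hsmul h
    classical
    have hPsi : ∀ i : Fin N, ∃ c, ∀ f, ordC (⇑χ) (X i) Θ f = ThetaC χ m c f := by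
      intro i
      refine ih _ ?_ ?_ (h (X i))
      · intro x y; simp only [ordC, mul_add, hadd]; ring
      · intro w x
        simp only [ordC]
        rw [mul_smul_comm, hsmul, hsmul, mul_smul_comm, smul_sub]
    choose cc hcc using hPsi
    -- symmetry of iterated commutators
    have hsym : ∀ (i j : Fin N) f, ordC (⇑χ) (X j) (ordC (⇑χ) (X i) Θ) f
        = ordC (⇑χ) (X i) (ordC (⇑χ) (X j) Θ) f := by
      intro i j f
      simp only [ordC]
      rw [show X i * (X j * f) = X j * (X i * f) by ring]
      ring
    -- coherence of the chosen coefficient families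
    have hcoh : ∀ (i j : Fin N) (γ : Fin N →₀ ℕ), deg γ + 1 ≤ m →
        cc i (γ + Finsupp.single j 1) = cc j (γ + Finsupp.single i 1) := by
      intro i j γ hγ
      obtain ⟨m', rfl⟩ : ∃ m', m = m' + 1 := ⟨m - 1, by omega⟩
      have e1 : ∀ f, ThetaC χ m' (fun δ => cc i (δ + Finsupp.single j 1)) f
          = ThetaC χ m' (fun δ => cc j (δ + Finsupp.single i 1)) f := by
        intro f
        rw [← ordC_X_thetaC, ← ordC_X_thetaC]
        simp only [ordC, ← hcc]
        exact hsym i j f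
      exact thetaC_unique χ m' _ _ e1 γ (by omega)
    -- the global coefficient function
    have hidx : ∀ (α : Fin N →₀ ℕ), α ≠ 0 → α.support.Nonempty :=
      fun α hα => Finsupp.support_nonempty_iff.mpr hα
    set c : (Fin N →₀ ℕ) → S' := fun α =>
      if hα : α = 0 then 0
      else cc (α.support.min' (hidx α hα)) (α - Finsupp.single (α.support.min' (hidx α hα)) 1)
      with hcdef
    have claimA : ∀ (i : Fin N) (δ : Fin N →₀ ℕ), deg δ ≤ m →
        c (δ + Finsupp.single i 1) = cc i δ := by
      intro i δ hδ
      set α := δ + Finsupp.single i 1 with hαdef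
      have hα0 : α ≠ 0 := by
        intro h0
        have h1 : α i = 0 := by rw [h0]; rfl
        rw [hαdef, Finsupp.add_apply, Finsupp.single_apply, if_pos rfl] at h1
        omega
      set j := α.support.min' (hidx α hα0) with hjdef
      have hj : j ∈ α.support := α.support.min'_mem _
      have hc : c α = cc j (α - Finsupp.single j 1) := by
        rw [hcdef]; simp only; rw [dif_neg hα0]
      by_cases hij : j = i
      · rw [hc, hij, hαdef, add_tsub_cancel_right]
      · have hjδ : δ j ≠ 0 := by
          have hji := Finsupp.mem_support_iff.mp hj
          rw [hαdef, Finsupp.add_apply] at hji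
          have hsi : (Finsupp.single i 1) j = 0 := by
            rw [Finsupp.single_apply, if_neg (fun h => hij (Eq.symm h))]
          rw [hsi] at hji
          simpa using hji
        have hjle : Finsupp.single j 1 ≤ δ := by
          rw [Finsupp.single_le_iff]; omega
        have e1 : α - Finsupp.single j 1 = (δ - Finsupp.single j 1) + Finsupp.single i 1 := by
          ext a
          simp only [hαdef, Finsupp.coe_tsub, Finsupp.coe_add, Pi.sub_apply, Pi.add_apply,
            Finsupp.single_apply]
          split_ifs <;> omega
        have e2 : deg (δ - Finsupp.single j 1) + 1 ≤ m := by
          have h3 : deg (δ - Finsupp.single j 1) + deg (Finsupp.single j 1) = deg δ := by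
            rw [← deg_add, tsub_add_cancel_of_le hjle]
          rw [deg_single] at h3
          have : 1 ≤ deg δ := by
            have : δ j ≤ deg δ := Finset.single_le_sum (f := fun a => δ a)
              (fun _ _ => Nat.zero_le _) (Finset.mem_univ j)
            omega
          omega
        rw [hc, e1, hcoh j i _ e2, tsub_add_cancel_of_le hjle]
    -- the difference operator
    set Δ : MvPolynomial (Fin N) A → S' := fun f => Θ f - ThetaC χ (m + 1) c f with hΔdef
    have hΔadd : ∀ x y, Δ (x + y) = Δ x + Δ y := by
      intro x y; simp only [hΔdef, hadd, thetaC_add]; ring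
    have hΔsmul : ∀ (w : A) x, Δ (w • x) = w • Δ x := by
      intro w x; simp only [hΔdef, hsmul, thetaC_smul, smul_sub]
    have hΔX : ∀ (i : Fin N) f, Δ (X i * f) = χ (X i) * Δ f := by
      intro i f
      have e1 := hcc i f
      have e2 : ordC (⇑χ) (X i) (ThetaC χ (m + 1) c) f = ThetaC χ m (cc i) f := by
        rw [ordC_X_thetaC]
        refine Finset.sum_congr rfl fun δ hδ => ?_
        show χ (hd δ f) * c (δ + Finsupp.single i 1) = χ (hd δ f) * cc i δ
        rw [claimA i δ (mem_Am.mp hδ)]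
      simp only [ordC] at e1 e2
      simp only [hΔdef]
      linear_combination e1 - e2
    have hΔmul := ordC_zero_of_X χ Δ hΔadd hΔsmul hΔX
    have hΔeval : ∀ f, Δ f = χ f * Δ 1 := by
      intro f
      have := hΔmul f 1
      rwa [mul_one] at this
    refine ⟨Function.update c 0 (Δ 1), fun f => ?_⟩
    have hsplit : ∀ (d : (Fin N →₀ ℕ) → S'), ThetaC χ (m + 1) d f
        = χ (hd 0 f) * d 0 + ∑ α ∈ (Am N (m + 1)).erase 0, χ (hd α f) * d α := by
      intro d
      rw [ThetaC, ← Finset.add_sum_erase _ _ (zero_mem_Am (m + 1))]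
    rw [hsplit, Function.update_self]
    have herase : ∑ α ∈ (Am N (m + 1)).erase 0, χ (hd α f) * (Function.update c 0 (Δ 1)) α
        = ∑ α ∈ (Am N (m + 1)).erase 0, χ (hd α f) * c α := by
      refine Finset.sum_congr rfl fun α hα => ?_
      rw [Function.update_of_ne (Finset.ne_of_mem_erase hα)]
    rw [herase]
    have hc0 : c 0 = 0 := by rw [hcdef]; simp
    have := hΔeval f
    simp only [hΔdef] at this
    rw [hsplit c, hc0, mul_zero, zero_add] at this
    rw [hd_zero]
    linear_combination this

theorem ordLE_congr_chi {R S : Type*} [CommRing R] [CommRing S] {χ χ' : R → S}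
    (hχ : ∀ a, χ a = χ' a) : ∀ (q : ℕ) (Θ : R → S), OrdLE χ q Θ → OrdLE χ' q Θ := by
  intro q
  induction q with
  | zero =>
    intro Θ h a
    funext f
    have := congr_fun (h a) f
    simp only [ordC, Pi.zero_apply, hχ] at this ⊢
    exact this
  | succ q ih =>
    intro Θ h a
    refine ordLE_congr χ' q (Θ := ordC χ a Θ) ?_ (ih _ (h a))
    intro f
    simp only [ordC, hχ]

theorem mk_smul_comm {W B : Type*} [CommRing W] [CommRing B] [Algebra W B] (I : Ideal B)
    (w : W) (x : B) :
    Ideal.Quotient.mk I (w • x) = w • Ideal.Quotient.mk I x := by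
  have h := map_smul (Ideal.Quotient.mkₐ W I) w x
  rwa [Ideal.Quotient.mkₐ_eq_mk] at h

theorem exists_section {W' B R' : Type v} [CommRing W'] [CommRing B] [CommRing R']
    [Algebra W' B] [Algebra W' R'] [Algebra.FormallySmooth W' B]
    (q' : R' →ₐ[W'] B) (hsurj : Function.Surjective q') (K : Ideal R') (e : ℕ)
    (hKe : (RingHom.ker (q' : R' →+* B)) ^ e ≤ K) (hK : K ≤ RingHom.ker (q' : R' →+* B)) :
    ∃ s : B →ₐ[W'] R' ⧸ K, ∀ (b : B) (x : R'), Ideal.Quotient.mk K x = s b → q' x = b := by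
  have hker0 : ∀ a ∈ K, q' a = 0 := fun a ha => (RingHom.mem_ker).mp (hK ha)
  set ρ : (R' ⧸ K) →ₐ[W'] B := Ideal.Quotient.liftₐ K q' hker0 with hρdef
  have hρmk : ∀ x : R', ρ (Ideal.Quotient.mk K x) = q' x := by
    intro x
    rw [hρdef, Ideal.Quotient.liftₐ_apply]
    rfl
  have hρsurj : Function.Surjective ρ := by
    intro b
    obtain ⟨x, rfl⟩ := hsurj b
    exact ⟨Ideal.Quotient.mk K x, hρmk x⟩
  have hρker : IsNilpotent (RingHom.ker (ρ : (R' ⧸ K) →+* B)) := by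
    refine ⟨e, ?_⟩
    have h1 : RingHom.ker (ρ : (R' ⧸ K) →+* B)
        = (RingHom.ker (q' : R' →+* B)).map (Ideal.Quotient.mk K) := by
      ext x
      obtain ⟨y, rfl⟩ := Ideal.Quotient.mk_surjective x
      constructor
      · intro hx
        refine Ideal.mem_map_of_mem _ ?_
        have hx' : ρ (Ideal.Quotient.mk K y) = 0 := hx
        rw [RingHom.mem_ker]
        show q' y = 0
        rw [← hρmk y]
        exact hx'
      · intro hx
        rw [Ideal.mem_map_iff_of_surjective _ Ideal.Quotient.mk_surjective] at hx
        obtain ⟨z, hz, hzy⟩ := hx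
        rw [RingHom.mem_ker, ← hzy]
        have : ρ (Ideal.Quotient.mk K z) = 0 := by
          rw [hρmk]
          exact (RingHom.mem_ker).mp hz
        exact this
    rw [h1, ← Ideal.map_pow, Ideal.zero_eq_bot]
    exact Ideal.map_mk_eq_bot_of_le hKe
  set s := Algebra.FormallySmooth.liftOfSurjective (AlgHom.id W' B) ρ hρsurj hρker with hsdef
  refine ⟨s, ?_⟩
  intro b x hx
  have h2 := Algebra.FormallySmooth.liftOfSurjective_apply (AlgHom.id W' B) ρ hρsurj hρker b
  rw [← hρmk x, hx, hsdef]
  simpa using h2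
end DiffOpProofAux

open DiffOpProofAux

/-- Let `k` be a perfect field of characteristic `p`, `W(k)` its ring of
`p`-typical Witt vectors, `B` a smooth `W(k)`-algebra, `n ≥ 1` and `B_n = B/pⁿB` (a smooth
algebra over `W_n(k) = W(k)/pⁿW(k)`).  Every differential operator of order `≤ m` on `B`
induces one on `B_n`, and the induced map `𝒟_m(B) ⊗_{W(k)} W_n(k) → 𝒟_m(B_n)` is bijective:
equivalently (since `W_n(k) = W(k)/pⁿ`), the reduction map `𝒟_m(B) → 𝒟_m(B_n)` is surjective
and its kernel is `pⁿ·𝒟_m(B)`. -/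
theorem diffOps_tensor_truncation_bijective (p : ℕ) [Fact p.Prime]
    (k : Type u) [Field k] [CharP k p] [PerfectRing k p]
    (B : Type u) [CommRing B] [Algebra (WittVector p k) B]
    [Algebra.FormallySmooth (WittVector p k) B]
    [Algebra.FinitePresentation (WittVector p k) B]
    (n : ℕ) (hn : 1 ≤ n) (m : ℕ) :
    -- every `θ ∈ 𝒟_m(B)` preserves `pⁿB` and induces an element of `𝒟_m(B_n)`
    (∀ θ : B → B, IsDiffOp (WittVector p k) B m θ →
      ∃ θbar : (B ⧸ Ideal.span {(p : B) ^ n}) → (B ⧸ Ideal.span {(p : B) ^ n}),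
        IsDiffOp (WittVector p k) (B ⧸ Ideal.span {(p : B) ^ n}) m θbar ∧
        ∀ x : B, θbar (Ideal.Quotient.mk (Ideal.span {(p : B) ^ n}) x) =
          Ideal.Quotient.mk (Ideal.span {(p : B) ^ n}) (θ x)) ∧
    -- surjectivity of the reduction map `𝒟_m(B) → 𝒟_m(B_n)`
    (∀ θbar : (B ⧸ Ideal.span {(p : B) ^ n}) → (B ⧸ Ideal.span {(p : B) ^ n}),
      IsDiffOp (WittVector p k) (B ⧸ Ideal.span {(p : B) ^ n}) m θbar →
      ∃ θ : B → B, IsDiffOp (WittVector p k) B m θ ∧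
        ∀ x : B, θbar (Ideal.Quotient.mk (Ideal.span {(p : B) ^ n}) x) =
          Ideal.Quotient.mk (Ideal.span {(p : B) ^ n}) (θ x)) ∧
    -- the kernel of the reduction map is `pⁿ·𝒟_m(B)`
    (∀ θ : B → B, IsDiffOp (WittVector p k) B m θ →
      ((∀ x : B, Ideal.Quotient.mk (Ideal.span {(p : B) ^ n}) (θ x) = 0) ↔
        ∃ η : B → B, IsDiffOp (WittVector p k) B m η ∧
          ∀ x : B, θ x = (p : B) ^ n * η x)) := by
  classical
  have hcast : ∀ cB : B, (p : B) ^ n * cB = ((p : WittVector p k) ^ n) • cB := by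
    intro cB
    rw [Algebra.smul_def, map_pow, map_natCast]
  refine ⟨?_, ?_, ?_⟩
  · -- Part 1 : reduction of differential operators
    intro θ hθ
    obtain ⟨hadd, hsmul, hord⟩ := hθ
    have h0 : θ 0 = 0 := by have := hadd 0 0; simpa using this
    have hsub : ∀ x y, θ (x - y) = θ x - θ y := by
      intro x y
      have h1 := hadd (x - y) y
      rw [sub_add_cancel] at h1
      exact eq_sub_of_add_eq h1.symm
    have hpres : ∀ g ∈ Ideal.span {(p : B) ^ n}, θ g ∈ Ideal.span {(p : B) ^ n} := by
      intro g hg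
      obtain ⟨cB, rfl⟩ := Ideal.mem_span_singleton.mp hg
      rw [hcast, hsmul, ← hcast]
      exact Ideal.mem_span_singleton.mpr (Dvd.intro _ rfl)
    have hfib : ∀ x y : B,
        Ideal.Quotient.mk (Ideal.span {(p : B) ^ n}) x
          = Ideal.Quotient.mk (Ideal.span {(p : B) ^ n}) y →
        Ideal.Quotient.mk (Ideal.span {(p : B) ^ n}) (θ x)
          = Ideal.Quotient.mk (Ideal.span {(p : B) ^ n}) (θ y) := by
      intro x y hxy
      rw [Ideal.Quotient.eq] at hxy ⊢
      rw [← hsub]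
      exact hpres _ hxy
    set rep : (B ⧸ Ideal.span {(p : B) ^ n}) → B :=
      Function.surjInv Ideal.Quotient.mk_surjective with hrepdef
    have hrep : ∀ z, Ideal.Quotient.mk (Ideal.span {(p : B) ^ n}) (rep z) = z :=
      fun z => Function.surjInv_eq _ z
    set θbar : (B ⧸ Ideal.span {(p : B) ^ n}) → (B ⧸ Ideal.span {(p : B) ^ n}) :=
      fun z => Ideal.Quotient.mk (Ideal.span {(p : B) ^ n}) (θ (rep z)) with hθbardef
    have hcompat : ∀ x : B, θbar (Ideal.Quotient.mk (Ideal.span {(p : B) ^ n}) x)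
        = Ideal.Quotient.mk (Ideal.span {(p : B) ^ n}) (θ x) :=
      fun x => hfib _ _ (hrep _)
    refine ⟨θbar, ⟨?_, ?_, ?_⟩, hcompat⟩
    · intro z w
      obtain ⟨x, rfl⟩ := Ideal.Quotient.mk_surjective z
      obtain ⟨y, rfl⟩ := Ideal.Quotient.mk_surjective w
      rw [← map_add, hcompat, hcompat, hcompat, hadd, map_add]
    · intro w z
      obtain ⟨x, rfl⟩ := Ideal.Quotient.mk_surjective z
      rw [← mk_smul_comm, hcompat, hcompat, hsmul, mk_smul_comm]
    · exact descend_ord (Ideal.Quotient.mk (Ideal.span {(p : B) ^ n}))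
        Ideal.Quotient.mk_surjective m θ θbar hcompat hord
  · -- Part 2 : surjectivity of the reduction map
    intro θbar hθbar
    obtain ⟨hbadd, hbsmul, hbord⟩ := hθbar
    obtain ⟨N', q', hq'surj, -⟩ :=
      Algebra.FinitePresentation.out (R := WittVector p k) (A := B)
    set J : Ideal (MvPolynomial (Fin N') (WittVector p k)) :=
      RingHom.ker (q' : MvPolynomial (Fin N') (WittVector p k) →+* B) with hJdef
    set K : Ideal (MvPolynomial (Fin N') (WittVector p k)) := J ^ (m + 1) with hKdef
    obtain ⟨s, hs⟩ := exists_section q' hq'surj K (m + 1) (le_of_eq hKdef.symm)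
      ((le_of_eq hKdef).trans (Ideal.pow_le_self (Nat.succ_ne_zero m)))
    set π := Ideal.Quotient.mk (Ideal.span {(p : B) ^ n}) with hπdef
    set χ₀ : MvPolynomial (Fin N') (WittVector p k)
        →ₐ[WittVector p k] (B ⧸ Ideal.span {(p : B) ^ n}) :=
      (Ideal.Quotient.mkₐ (WittVector p k) (Ideal.span {(p : B) ^ n})).comp q' with hχ₀def
    have hχ₀ : ∀ f, χ₀ f = π (q' f) := by
      intro f
      simp [hχ₀def, hπdef, Ideal.Quotient.mkₐ_eq_mk]
    set Θ₀ : MvPolynomial (Fin N') (WittVector p k) → (B ⧸ Ideal.span {(p : B) ^ n}) :=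
      fun f => θbar (π (q' f)) with hΘ₀def
    have hΘ₀ord : OrdLE (⇑χ₀) m Θ₀ := by
      have h1 : OrdLE (id : (B ⧸ Ideal.span {(p : B) ^ n}) → _) m θbar :=
        ordLE_of_isDiffOp m θbar hbord
      have h2 := ordLE_pullback (fun f => π (q' f))
        (fun x y => by show π (q' (x * y)) = π (q' x) * π (q' y); rw [map_mul, map_mul])
        id m θbar h1
      exact ordLE_congr_chi (fun a => (hχ₀ a).symm) m Θ₀ h2
    have hΘ₀add : ∀ x y, Θ₀ (x + y) = Θ₀ x + Θ₀ y := by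
      intro x y
      simp only [hΘ₀def, map_add]
      exact hbadd _ _
    have hΘ₀smul : ∀ (w : WittVector p k) x, Θ₀ (w • x) = w • Θ₀ x := by
      intro w x
      simp only [hΘ₀def, map_smul, hπdef, mk_smul_comm]
      exact hbsmul _ _
    obtain ⟨c, hc⟩ := thetaC_exists χ₀ m Θ₀ hΘ₀add hΘ₀smul hΘ₀ord
    choose clift hclift using
      fun α => Ideal.Quotient.mk_surjective (I := Ideal.span {(p : B) ^ n}) (c α)
    set Θ := ThetaC q' m clift with hΘdef
    have hπΘ : ∀ f, π (Θ f) = Θ₀ f := by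
      intro f
      rw [hc f, hΘdef, ThetaC, ThetaC, map_sum]
      refine Finset.sum_congr rfl fun α _ => ?_
      rw [map_mul, hclift α, hχ₀]
    have hΘord : OrdLE (⇑q') m Θ := thetaC_ordLE q' m clift
    have hΘadd : ∀ x y, Θ (x + y) = Θ x + Θ y := fun x y => thetaC_add q' m clift x y
    have hΘkill : ∀ g ∈ K, Θ g = 0 := by
      intro g hg
      exact ordLE_kills (q' : MvPolynomial (Fin N') (WittVector p k) →+* B) m Θ hΘadd hΘord g
        (by rw [← hJdef, ← hKdef]; exact hg)
    have hfib : ∀ f f', Ideal.Quotient.mk K f = Ideal.Quotient.mk K f' → Θ f = Θ f' := by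
      intro f f' hff
      have hmem : f - f' ∈ K := Ideal.Quotient.eq.mp hff
      have h4 : Θ f = Θ f' + Θ (f - f') := by
        rw [← hΘadd]
        congr 1
        ring
      rw [h4, hΘkill _ hmem, add_zero]
    set rep := Function.surjInv (Ideal.Quotient.mk_surjective (I := K)) with hrepdef
    have hrep : ∀ z, Ideal.Quotient.mk K (rep z) = z := fun z => Function.surjInv_eq _ z
    have hqs : ∀ b, q' (rep (s b)) = b := fun b => hs b (rep (s b)) (hrep (s b))
    refine ⟨fun b => Θ (rep (s b)), ⟨?_, ?_, ?_⟩, ?_⟩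
    · intro x y
      have h5 : Ideal.Quotient.mk K (rep (s (x + y)))
          = Ideal.Quotient.mk K (rep (s x) + rep (s y)) := by
        rw [hrep, map_add, map_add, hrep, hrep]
      show Θ (rep (s (x + y))) = Θ (rep (s x)) + Θ (rep (s y))
      rw [hfib _ _ h5, hΘadd]
    · intro w x
      have h6 : Ideal.Quotient.mk K (rep (s (w • x)))
          = Ideal.Quotient.mk K (w • rep (s x)) := by
        rw [hrep, map_smul, mk_smul_comm, hrep]
      show Θ (rep (s (w • x))) = w • Θ (rep (s x))
      rw [hfib _ _ h6, hΘdef, thetaC_smul]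
    · exact transport_ord (⇑q') (⇑(Ideal.Quotient.mk K)) (fun x y => map_mul _ x y) rep hrep
        (⇑s) (fun x y => map_mul s x y) hqs m Θ hfib hΘord
    · intro x
      show θbar (π x) = π (Θ (rep (s x)))
      rw [hπΘ]
      simp only [hΘ₀def]
      rw [hqs]
  · -- Part 3 : the kernel of the reduction map
    intro θ hθ
    obtain ⟨hadd, hsmul, hord⟩ := hθ
    constructor
    · intro hker
      -- torsion-freeness of B
      have hp1 : ∀ t : B, (p : B) * t = 0 → t = 0 := by
        intro t hpt
        by_contra ht
        obtain ⟨N', q', hq'surj, -⟩ :=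
          Algebra.FinitePresentation.out (R := WittVector p k) (A := B)
        letI : IsDiscreteValuationRing (WittVector p k) := WittVector.isDiscreteValuationRing
        set J : Ideal (MvPolynomial (Fin N') (WittVector p k)) :=
          RingHom.ker (q' : MvPolynomial (Fin N') (WittVector p k) →+* B) with hJdef
        set Np : Ideal (MvPolynomial (Fin N') (WittVector p k)) :=
          Ideal.span {(p : MvPolynomial (Fin N') (WittVector p k))} with hNpdef
        obtain ⟨cA, hAR⟩ := Ideal.exists_pow_inf_eq_pow_smul J
          (Np : Submodule (MvPolynomial (Fin N') (WittVector p k))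
            (MvPolynomial (Fin N') (WittVector p k)))
        obtain ⟨s, hs⟩ := exists_section q' hq'surj (J ^ (cA + 1)) (cA + 1) le_rfl
          (Ideal.pow_le_self (Nat.succ_ne_zero cA))
        obtain ⟨u, hu⟩ := Ideal.Quotient.mk_surjective (s t)
        have hpu : (p : MvPolynomial (Fin N') (WittVector p k)) * u ∈ J ^ (cA + 1) := by
          rw [← Ideal.Quotient.eq_zero_iff_mem, map_mul, map_natCast, hu]
          have h7 : ((p : MvPolynomial (Fin N') (WittVector p k) ⧸ J ^ (cA + 1))) * s t
              = s ((p : B) * t) := by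
            rw [map_mul, map_natCast]
          rw [h7, hpt, map_zero]
        have hpu2 : (p : MvPolynomial (Fin N') (WittVector p k)) * u ∈ Np :=
          Ideal.mem_span_singleton.mpr (Dvd.intro u rfl)
        have h8 := hAR (cA + 1) (Nat.le_succ cA)
        have h9 : (p : MvPolynomial (Fin N') (WittVector p k)) * u
            ∈ J ^ (cA + 1) • (⊤ : Submodule (MvPolynomial (Fin N') (WittVector p k))
              (MvPolynomial (Fin N') (WittVector p k))) ⊓ (Np : Submodule _ _) := by
          refine Submodule.mem_inf.mpr ⟨?_, hpu2⟩
          rw [Ideal.smul_eq_mul, Ideal.mul_top]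
          exact hpu
        rw [h8] at h9
        have h10 : (p : MvPolynomial (Fin N') (WittVector p k)) * u ∈ Np * J := by
          have hsub1 : J ^ (cA + 1 - cA) •
              (J ^ cA • (⊤ : Submodule (MvPolynomial (Fin N') (WittVector p k))
                (MvPolynomial (Fin N') (WittVector p k))) ⊓ (Np : Submodule _ _))
              ≤ J • (Np : Submodule _ _) := by
            have hcc : cA + 1 - cA = 1 := by omega
            rw [hcc, pow_one]
            exact Submodule.smul_mono le_rfl inf_le_right
          have h11 := hsub1 h9
          rw [Ideal.smul_eq_mul, mul_comm] at h11
          exact h11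
        rw [hNpdef] at h10
        obtain ⟨z, hz, hzz⟩ := Ideal.mem_span_singleton_mul.mp h10
        have h12 : (p : MvPolynomial (Fin N') (WittVector p k)) * (u - z) = 0 := by
          rw [mul_sub, hzz, sub_self]
        have hpW : ((p : ℕ) : WittVector p k) ≠ 0 := WittVector.p_nonzero p k
        have hpR : (p : MvPolynomial (Fin N') (WittVector p k)) ≠ 0 := by
          intro h0
          apply hpW
          have h13 : (MvPolynomial.C ((p : ℕ) : WittVector p k)
              : MvPolynomial (Fin N') (WittVector p k)) = 0 := by
            rw [map_natCast (MvPolynomial.C : WittVector p k →+*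
              MvPolynomial (Fin N') (WittVector p k))]
            exact h0
          exact MvPolynomial.C_eq_zero.mp h13
        have h14 : u = z := by
          rcases mul_eq_zero.mp h12 with h | h
          · exact absurd h hpR
          · exact sub_eq_zero.mp h
        have h15 : q' u = t := hs t u hu
        apply ht
        rw [← h15, h14]
        exact (RingHom.mem_ker).mp hz
      have hregpow : ∀ (j : ℕ) (t : B), (p : B) ^ j * t = 0 → t = 0 := by
        intro j
        induction j with
        | zero => intro t h; simpa using h
        | succ j ih =>
          intro t h
          have h' : (p : B) ^ j * ((p : B) * t) = 0 := by rw [← h]; ring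
          exact hp1 t (ih _ h')
      have hreg : ∀ t : B, (p : B) ^ n * t = 0 → t = 0 := hregpow n
      have hdvd : ∀ x : B, ∃ cB, θ x = (p : B) ^ n * cB := by
        intro x
        have hmem : θ x ∈ Ideal.span {(p : B) ^ n} :=
          Ideal.Quotient.eq_zero_iff_mem.mp (hker x)
        obtain ⟨cB, hcB⟩ := Ideal.mem_span_singleton.mp hmem
        exact ⟨cB, hcB⟩
      choose η hη using hdvd
      have hregeq : ∀ x y : B, (p : B) ^ n * x = (p : B) ^ n * y → x = y := by
        intro x y hxy
        have : (p : B) ^ n * (x - y) = 0 := by rw [mul_sub, hxy, sub_self]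
        have := hreg _ this
        exact sub_eq_zero.mp this
      refine ⟨η, ⟨?_, ?_, ?_⟩, hη⟩
      · intro x y
        refine hregeq _ _ ?_
        rw [mul_add, ← hη, ← hη, ← hη, hadd]
      · intro w x
        refine hregeq _ _ ?_
        rw [← hη, hsmul, hη, mul_smul_comm]
      · exact div_ord ((p : B) ^ n) hregeq m θ η hη hord
    · rintro ⟨η, hηop, hη⟩ x
      rw [hη]
      exact Ideal.Quotient.eq_zero_iff_mem.mpr
        (Ideal.mem_span_singleton.mpr (dvd_mul_right _ _))
end

section
/- Let m ≥ 1. In the ring of ℤ-linear endomorphisms of the polynomial ring ℤ[z₁,…,z_m], for 𝐚, 𝐛 ∈ ℕ^m let θ_{𝐚,𝐛} denote the composite of the multivariate Hasse derivative ∂^{[𝐛]} followed by multiplication by the monomial z^𝐚. Then the ℤ-submodule of End_ℤ(ℤ[z₁,…,z_m]) spanned by the operators {θ_{𝐚,𝐛} : 𝐚, 𝐛 ∈ ℕ^m} is closed under composition; since it contains θ_{𝟎,𝟎} = id, it is therefore a ℤ-subalgebra (the m-th crystalline Weyl algebra S_m(ℤ)). -/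
/-- The multivariate Hasse derivative `∂^{[𝐛]}` on `ℤ[z₁,…,z_m]`: it sends a monomial `z^𝐜` to
`(∏ⱼ binom(cⱼ, bⱼ)) · z^{𝐜−𝐛}` (which vanishes if `cⱼ < bⱼ` for some `j`); it is the composite
of the one-variable Hasse derivatives in the separate variables. -/
noncomputable def mvHasseDeriv {m : ℕ} (b : Fin m →₀ ℕ)
    (f : MvPolynomial (Fin m) ℤ) : MvPolynomial (Fin m) ℤ :=
  ∑ e ∈ f.support,
    MvPolynomial.monomial (e - b)
      (((∏ j ∈ b.support, (e j).choose (b j) : ℕ) : ℤ) * MvPolynomial.coeff e f)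

open MvPolynomial

section Aux

variable {m : ℕ}

lemma prod_supp (e b : Fin m →₀ ℕ) :
    (∏ j ∈ b.support, (e j).choose (b j)) = ∏ j : Fin m, (e j).choose (b j) :=
  Finset.prod_subset (Finset.subset_univ _)
    (fun j _ hj => by simp [Finsupp.notMem_support_iff.mp hj])

lemma nat_key (n k l : ℕ) : n.choose k * (n - k).choose l = (k+l).choose k * n.choose (k+l) := by
  rcases le_or_gt (k+l) n with h | h
  · have := Nat.choose_mul (n := n) (Nat.le_add_right k l)
    rw [Nat.add_sub_cancel_left] at this
    rw [← this, Nat.mul_comm]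
  · rw [Nat.choose_eq_zero_of_lt h, Nat.mul_zero]
    rcases le_or_gt k n with hk | hk
    · rw [Nat.choose_eq_zero_of_lt (by omega : n - k < l), Nat.mul_zero]
    · rw [Nat.choose_eq_zero_of_lt hk, Nat.zero_mul]

lemma mvH_monomial (b e : Fin m →₀ ℕ) (r : ℤ) :
    mvHasseDeriv b (monomial e r) =
      monomial (e - b) (((∏ j : Fin m, (e j).choose (b j) : ℕ) : ℤ) * r) := by
  by_cases hr : r = 0
  · simp [mvHasseDeriv, hr]
  · rw [mvHasseDeriv, support_monomial, if_neg hr, Finset.sum_singleton, coeff_monomial,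
      if_pos rfl, prod_supp]

lemma mvH_sum_superset (b : Fin m →₀ ℕ) (f : MvPolynomial (Fin m) ℤ) (s : Finset (Fin m →₀ ℕ))
    (hs : f.support ⊆ s) :
    mvHasseDeriv b f = ∑ e ∈ s, monomial (e - b)
      (((∏ j ∈ b.support, (e j).choose (b j) : ℕ) : ℤ) * MvPolynomial.coeff e f) :=
  Finset.sum_subset hs (fun e _ he => by
    simp [MvPolynomial.notMem_support_iff.mp he])

lemma mvH_add (b : Fin m →₀ ℕ) (f g : MvPolynomial (Fin m) ℤ) :
    mvHasseDeriv b (f + g) = mvHasseDeriv b f + mvHasseDeriv b g := by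
  have h1 : f.support ⊆ (f + g).support ∪ f.support ∪ g.support := by
    intro x; simp_all
  have h2 : g.support ⊆ (f + g).support ∪ f.support ∪ g.support := by
    intro x; simp_all
  have h3 : (f + g).support ⊆ (f + g).support ∪ f.support ∪ g.support := by
    intro x; simp_all
  rw [mvH_sum_superset b f _ h1, mvH_sum_superset b g _ h2, mvH_sum_superset b (f+g) _ h3,
    ← Finset.sum_add_distrib]
  refine Finset.sum_congr rfl fun e _ => ?_
  rw [coeff_add, mul_add, map_add]

lemma mvH_smul (b : Fin m →₀ ℕ) (c : ℤ) (f : MvPolynomial (Fin m) ℤ) :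
    mvHasseDeriv b (c • f) = c • mvHasseDeriv b f := by
  by_cases hc : c = 0
  · simp [hc, mvHasseDeriv]
  have h1 : (c • f).support = f.support := MvPolynomial.support_smul_eq hc f
  rw [mvHasseDeriv, h1, mvHasseDeriv, Finset.smul_sum]
  refine Finset.sum_congr rfl fun e _ => ?_
  rw [MvPolynomial.coeff_smul, MvPolynomial.smul_monomial, smul_eq_mul, smul_eq_mul,
    mul_left_comm]

lemma mvH_comp (b b' : Fin m →₀ ℕ) (f : MvPolynomial (Fin m) ℤ) :
    mvHasseDeriv b (mvHasseDeriv b' f) =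
      ((∏ j : Fin m, ((b + b') j).choose (b j) : ℕ) : ℤ) • mvHasseDeriv (b + b') f := by
  induction f using MvPolynomial.induction_on' with
  | add p q hp hq => rw [mvH_add, mvH_add, hp, hq, mvH_add, smul_add]
  | monomial e r =>
    rw [mvH_monomial, mvH_monomial, mvH_monomial, MvPolynomial.smul_monomial]
    have hexp : e - b' - b = e - (b + b') := by rw [tsub_tsub, add_comm b b']
    rw [hexp]
    congr 1
    have hnat : (∏ j : Fin m, (e j).choose (b' j)) * (∏ j : Fin m, ((e - b') j).choose (b j)) =
        (∏ j : Fin m, ((b + b') j).choose (b j)) * ∏ j : Fin m, (e j).choose ((b + b') j) := by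
      rw [← Finset.prod_mul_distrib, ← Finset.prod_mul_distrib]
      refine Finset.prod_congr rfl fun j _ => ?_
      have h1 := nat_key (e j) (b' j) (b j)
      have h2 : (b' j + b j).choose (b' j) = (b j + b' j).choose (b j) := by
        rw [Nat.choose_symm_add, Nat.add_comm]
      simp only [Finsupp.tsub_apply, Finsupp.add_apply]
      rw [h1, h2, Nat.add_comm (b' j) (b j)]
    rw [smul_eq_mul, ← mul_assoc, mul_comm
      ((∏ j : Fin m, ((e - b') j).choose (b j) : ℕ) : ℤ)
      ((∏ j : Fin m, (e j).choose (b' j) : ℕ) : ℤ), ← Nat.cast_mul, hnat, Nat.cast_mul, mul_assoc]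

lemma X_mul_mono (i : Fin m) (u : Fin m →₀ ℕ) (s : ℤ) :
    (MvPolynomial.X i : MvPolynomial (Fin m) ℤ) * monomial u s
      = monomial (Finsupp.single i 1 + u) s := by
  rw [MvPolynomial.X, MvPolynomial.monomial_mul, one_mul]

lemma mvH_X_mul_of_zero (i : Fin m) (b : Fin m →₀ ℕ) (hbi : b i = 0)
    (f : MvPolynomial (Fin m) ℤ) :
    mvHasseDeriv b (MvPolynomial.X i * f) = MvPolynomial.X i * mvHasseDeriv b f := by
  induction f using MvPolynomial.induction_on' with
  | add p q hp hq => rw [mul_add, mvH_add, hp, hq, mvH_add, mul_add]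
  | monomial e r =>
    rw [X_mul_mono, mvH_monomial, mvH_monomial, X_mul_mono]
    have hexp : Finsupp.single i 1 + e - b = Finsupp.single i 1 + (e - b) := by
      ext j
      simp only [Finsupp.tsub_apply, Finsupp.add_apply, Finsupp.single_apply]
      rcases eq_or_ne i j with h | h
      · subst h; simp [hbi]
      · simp [h]
    have hcoeff : (∏ j : Fin m, (((Finsupp.single i 1 : Fin m →₀ ℕ) + e) j).choose (b j))
        = ∏ j : Fin m, (e j).choose (b j) := by
      refine Finset.prod_congr rfl fun j _ => ?_
      simp only [Finsupp.add_apply, Finsupp.single_apply]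
      rcases eq_or_ne i j with h | h
      · subst h; simp [hbi]
      · simp [h]
    rw [hexp, hcoeff]

lemma mvH_X_mul_of_ne (i : Fin m) (b : Fin m →₀ ℕ) (hbi : b i ≠ 0)
    (f : MvPolynomial (Fin m) ℤ) :
    mvHasseDeriv b (MvPolynomial.X i * f) = MvPolynomial.X i * mvHasseDeriv b f
      + mvHasseDeriv (b - Finsupp.single i 1) f := by
  induction f using MvPolynomial.induction_on' with
  | add p q hp hq => rw [mul_add, mvH_add, hp, hq, mvH_add, mvH_add, mul_add]; ring
  | monomial e r =>
    rw [X_mul_mono, mvH_monomial, mvH_monomial, mvH_monomial, X_mul_mono]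
    set δ : Fin m →₀ ℕ := Finsupp.single i 1 with hδ
    have hk1 : 1 ≤ b i := Nat.one_le_iff_ne_zero.mpr hbi
    have hPA : ∏ j ∈ Finset.univ.erase i, ((δ + e) j).choose (b j)
        = ∏ j ∈ Finset.univ.erase i, (e j).choose (b j) := by
      refine Finset.prod_congr rfl fun j hj => ?_
      have hji : j ≠ i := Finset.ne_of_mem_erase hj
      simp [hδ, Finsupp.single_apply, hji.symm]
    have hPD : ∏ j ∈ Finset.univ.erase i, (e j).choose ((b - δ) j)
        = ∏ j ∈ Finset.univ.erase i, (e j).choose (b j) := by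
      refine Finset.prod_congr rfl fun j hj => ?_
      have hji : j ≠ i := Finset.ne_of_mem_erase hj
      simp [hδ, Finsupp.tsub_apply, Finsupp.single_apply, hji.symm]
    set P := ∏ j ∈ Finset.univ.erase i, (e j).choose (b j) with hP
    have hδei : (δ + e) i = e i + 1 := by simp [hδ, Finsupp.add_apply, Nat.add_comm]
    have hbδi : (b - δ) i = b i - 1 := by simp [hδ, Finsupp.tsub_apply]
    have hA : (∏ j : Fin m, ((δ + e) j).choose (b j)) = (e i + 1).choose (b i) * P := by
      rw [← Finset.mul_prod_erase Finset.univ _ (Finset.mem_univ i), hδei, hPA]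
    have hB : (∏ j : Fin m, (e j).choose (b j)) = (e i).choose (b i) * P := by
      rw [← Finset.mul_prod_erase Finset.univ _ (Finset.mem_univ i)]
    have hD : (∏ j : Fin m, (e j).choose ((b - δ) j)) = (e i).choose (b i - 1) * P := by
      rw [← Finset.mul_prod_erase Finset.univ _ (Finset.mem_univ i), hbδi, hPD]
    rcases Nat.lt_or_ge (e i) (b i) with hnk | hnk
    · rcases Nat.lt_or_ge (e i + 1) (b i) with hnk1 | hnk1
      · rw [hA, hB, hD, Nat.choose_eq_zero_of_lt hnk1, Nat.choose_eq_zero_of_lt hnk,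
          Nat.choose_eq_zero_of_lt (by omega)]
        simp
      · have hnk' : e i + 1 = b i := by omega
        have hexp : δ + e - b = e - (b - δ) := by
          ext j
          simp only [Finsupp.tsub_apply, Finsupp.add_apply, hδ, Finsupp.single_apply]
          rcases eq_or_ne i j with h | h
          · subst h; simp; omega
          · simp [h]
        have h1 : (e i + 1).choose (b i) = 1 := by rw [hnk']; exact Nat.choose_self _
        have h2 : (e i).choose (b i - 1) = 1 := by
          have : b i - 1 = e i := by omega
          rw [this]; exact Nat.choose_self _
        rw [hexp, hA, hB, hD, Nat.choose_eq_zero_of_lt hnk, h1, h2]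
        simp
    · have hexp1 : δ + e - b = δ + (e - b) := by
        ext j
        simp only [Finsupp.tsub_apply, Finsupp.add_apply, hδ, Finsupp.single_apply]
        rcases eq_or_ne i j with h | h
        · subst h; simp; omega
        · simp [h]
      have hexp2 : δ + e - b = e - (b - δ) := by
        ext j
        simp only [Finsupp.tsub_apply, Finsupp.add_apply, hδ, Finsupp.single_apply]
        rcases eq_or_ne i j with h | h
        · subst h; simp; omega
        · simp [h]
      have hpascal : (e i + 1).choose (b i) = (e i).choose (b i) + (e i).choose (b i - 1) := by
        have := Nat.choose_succ_succ' (e i) (b i - 1)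
        rw [Nat.sub_add_cancel hk1] at this
        omega
      rw [← hexp1, ← hexp2, hA, hB, hD, hpascal, ← map_add]
      congr 1
      push_cast
      ring

def genSet (m : ℕ) : Set (MvPolynomial (Fin m) ℤ → MvPolynomial (Fin m) ℤ) :=
  {θ | ∃ a b : Fin m →₀ ℕ, θ = fun f => MvPolynomial.monomial a 1 * mvHasseDeriv b f}

lemma core (N : ℕ) : ∀ (a' : Fin m →₀ ℕ), (∑ j, a' j) = N → ∀ (a b b' : Fin m →₀ ℕ),
    (fun f => (monomial a 1 : MvPolynomial (Fin m) ℤ) *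
        mvHasseDeriv b (monomial a' 1 * mvHasseDeriv b' f)) ∈
      Submodule.span ℤ (genSet m) := by
  induction N with
  | zero =>
    intro a' hsum a b b'
    have ha' : a' = 0 := by
      ext j
      have := (Finset.sum_eq_zero_iff.mp hsum) j (Finset.mem_univ j)
      simpa using this
    subst ha'
    have h1 : (monomial (0 : Fin m →₀ ℕ) (1:ℤ)) = 1 := by
      rw [MvPolynomial.monomial_zero']; exact MvPolynomial.C_1
    have heq : (fun f => (monomial a 1 : MvPolynomial (Fin m) ℤ) *
        mvHasseDeriv b (monomial 0 1 * mvHasseDeriv b' f))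
        = ((∏ j : Fin m, ((b + b') j).choose (b j) : ℕ) : ℤ) •
          fun f => (monomial a 1 : MvPolynomial (Fin m) ℤ) * mvHasseDeriv (b + b') f := by
      funext f
      rw [h1, one_mul, mvH_comp, Pi.smul_apply, mul_smul_comm]
    rw [heq]
    exact Submodule.smul_mem _ _ (Submodule.subset_span ⟨a, b + b', rfl⟩)
  | succ N ih =>
    intro a' hsum a b b'
    have hex : ∃ i, a' i ≠ 0 := by
      by_contra h
      push_neg at h
      simp [h] at hsum
    obtain ⟨i, hi⟩ := hex
    set a'' := a' - Finsupp.single i 1 with ha''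
    have hsum' : (∑ j, a'' j) = N := by
      have h1 : ∑ j, a' j = a' i + ∑ j ∈ Finset.univ.erase i, a' j :=
        (Finset.add_sum_erase _ _ (Finset.mem_univ i)).symm
      have h2 : ∑ j, a'' j = a'' i + ∑ j ∈ Finset.univ.erase i, a'' j :=
        (Finset.add_sum_erase _ _ (Finset.mem_univ i)).symm
      have h3 : ∑ j ∈ Finset.univ.erase i, a'' j = ∑ j ∈ Finset.univ.erase i, a' j := by
        refine Finset.sum_congr rfl fun j hj => ?_
        have hji : j ≠ i := Finset.ne_of_mem_erase hj
        simp [ha'', Finsupp.tsub_apply, Finsupp.single_apply, hji.symm]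
      have h4 : a'' i = a' i - 1 := by simp [ha'', Finsupp.tsub_apply]
      omega
    have hkey : Finsupp.single i 1 + a'' = a' := by
      ext j
      simp only [ha'', Finsupp.add_apply, Finsupp.tsub_apply, Finsupp.single_apply]
      rcases eq_or_ne i j with h | h
      · subst h
        have h1 : 1 ≤ a' i := Nat.one_le_iff_ne_zero.mpr hi
        simp
        omega
      · simp [h]
    have hmono : (monomial a' 1 : MvPolynomial (Fin m) ℤ) =
        MvPolynomial.X i * monomial a'' 1 := by
      rw [X_mul_mono, hkey]
    by_cases hbi : b i = 0
    · have heq : (fun f => (monomial a 1 : MvPolynomial (Fin m) ℤ) *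
          mvHasseDeriv b (monomial a' 1 * mvHasseDeriv b' f))
          = fun f => (monomial (Finsupp.single i 1 + a) 1 : MvPolynomial (Fin m) ℤ) *
            mvHasseDeriv b (monomial a'' 1 * mvHasseDeriv b' f) := by
        funext f
        rw [hmono, mul_assoc, mvH_X_mul_of_zero i b hbi, ← mul_assoc, mul_comm (monomial a 1),
          X_mul_mono]
      rw [heq]
      exact ih a'' hsum' _ b b'
    · have heq : (fun f => (monomial a 1 : MvPolynomial (Fin m) ℤ) *
          mvHasseDeriv b (monomial a' 1 * mvHasseDeriv b' f))
          = (fun f => (monomial (Finsupp.single i 1 + a) 1 : MvPolynomial (Fin m) ℤ) *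
              mvHasseDeriv b (monomial a'' 1 * mvHasseDeriv b' f))
            + fun f => (monomial a 1 : MvPolynomial (Fin m) ℤ) *
              mvHasseDeriv (b - Finsupp.single i 1) (monomial a'' 1 * mvHasseDeriv b' f) := by
        funext f
        rw [Pi.add_apply, hmono, mul_assoc, mvH_X_mul_of_ne i b hbi, mul_add, ← mul_assoc,
          mul_comm (monomial a 1), X_mul_mono]
      rw [heq]
      exact Submodule.add_mem _ (ih a'' hsum' _ b b') (ih a'' hsum' _ _ b')

lemma mvH_zero (b : Fin m →₀ ℕ) : mvHasseDeriv b (0 : MvPolynomial (Fin m) ℤ) = 0 := by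
  simp [mvHasseDeriv]

end Aux

/-- The `ℤ`-submodule of the endomorphisms of `ℤ[z₁,…,z_m]` spanned by the
operators `θ_{𝐚,𝐛} : f ↦ z^𝐚 · ∂^{[𝐛]} f` (Hasse derivative followed by multiplication by a
monomial) is closed under composition; it is the `m`-th crystalline Weyl algebra `S_m(ℤ)`. -/
theorem crystallineWeylAlgebra_closed_under_comp (m : ℕ) (hm : 1 ≤ m)
    (θ₁ θ₂ : MvPolynomial (Fin m) ℤ → MvPolynomial (Fin m) ℤ)
    (h₁ : θ₁ ∈ Submodule.span ℤ
      {θ : MvPolynomial (Fin m) ℤ → MvPolynomial (Fin m) ℤ |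
        ∃ a b : Fin m →₀ ℕ, θ = fun f => MvPolynomial.monomial a 1 * mvHasseDeriv b f})
    (h₂ : θ₂ ∈ Submodule.span ℤ
      {θ : MvPolynomial (Fin m) ℤ → MvPolynomial (Fin m) ℤ |
        ∃ a b : Fin m →₀ ℕ, θ = fun f => MvPolynomial.monomial a 1 * mvHasseDeriv b f}) :
    θ₁ ∘ θ₂ ∈ Submodule.span ℤ
      {θ : MvPolynomial (Fin m) ℤ → MvPolynomial (Fin m) ℤ |
        ∃ a b : Fin m →₀ ℕ, θ = fun f => MvPolynomial.monomial a 1 * mvHasseDeriv b f} := by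
  show θ₁ ∘ θ₂ ∈ Submodule.span ℤ (genSet m)
  have h₁' : θ₁ ∈ Submodule.span ℤ (genSet m) := h₁
  have h₂' : θ₂ ∈ Submodule.span ℤ (genSet m) := h₂
  clear h₁ h₂
  induction h₁' using Submodule.span_induction with
  | zero =>
    have : (0 : MvPolynomial (Fin m) ℤ → MvPolynomial (Fin m) ℤ) ∘ θ₂ = 0 := rfl
    rw [this]; exact Submodule.zero_mem _
  | add x y hx hy ihx ihy =>
    have : (x + y) ∘ θ₂ = x ∘ θ₂ + y ∘ θ₂ := rfl
    rw [this]; exact Submodule.add_mem _ ihx ihy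
  | smul c x hx ihx =>
    have : (c • x) ∘ θ₂ = c • (x ∘ θ₂) := rfl
    rw [this]; exact Submodule.smul_mem _ _ ihx
  | mem θ hθ =>
    obtain ⟨a, b, rfl⟩ := hθ
    induction h₂' using Submodule.span_induction with
    | mem ψ hψ =>
      obtain ⟨a', b', rfl⟩ := hψ
      exact core (∑ j, a' j) a' rfl a b b'
    | zero =>
      have : ((fun f => (monomial a 1 : MvPolynomial (Fin m) ℤ) * mvHasseDeriv b f) ∘
          (0 : MvPolynomial (Fin m) ℤ → MvPolynomial (Fin m) ℤ)) = 0 := by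
        funext f
        simp [Function.comp, mvH_zero]
      rw [this]; exact Submodule.zero_mem _
    | add x y hx hy ihx ihy =>
      have : ((fun f => (monomial a 1 : MvPolynomial (Fin m) ℤ) * mvHasseDeriv b f) ∘ (x + y))
          = ((fun f => (monomial a 1 : MvPolynomial (Fin m) ℤ) * mvHasseDeriv b f) ∘ x)
            + ((fun f => (monomial a 1 : MvPolynomial (Fin m) ℤ) * mvHasseDeriv b f) ∘ y) := by
        funext f
        simp only [Function.comp_apply, Pi.add_apply, mvH_add, mul_add]
      rw [this]; exact Submodule.add_mem _ ihx ihy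
    | smul c x hx ihx =>
      have : ((fun f => (monomial a 1 : MvPolynomial (Fin m) ℤ) * mvHasseDeriv b f) ∘ (c • x))
          = c • ((fun f => (monomial a 1 : MvPolynomial (Fin m) ℤ) * mvHasseDeriv b f) ∘ x) := by
        funext f
        simp only [Function.comp_apply, Pi.smul_apply, mvH_smul, mul_smul_comm]
      rw [this]; exact Submodule.smul_mem _ _ ihx
end
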